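/- arXiv:1803.02050 — 4 statements merged into one kernel-verified Lean document; each statement's English description precedes it below -/
import Mathlib

section
/- Let A be a 2-torsion-free ring, M an A-bimodule, and δ : A → M a Jordan derivation. Then for all a, b ∈ A, δ(aba) = δ(a)ba + aδ(b)a + abδ(a). -/
/-!
Polarizing `δ (a * a)` gives a formula for `δ (x * y + y * x)`. Since
`a (ab + ba) + (ab + ba) a = (a²b + ba²) + 2 aba`, expanding this formula once for
`x = a, y = ab + ba` and once for `x = a², y = b` and subtracting yields
`2 δ(aba) = 2 (δ(a)ba + aδ(b)a + abδ(a))`; then cancel the `2`.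
-/

open MulOpposite

section JordanDerivation

variable {A M : Type*} [Ring A] [AddCommGroup M] [Module A M] [Module Aᵐᵒᵖ M]

/-- The right action `m a` of the bimodule `M` is written `op a • m`. -/
def IsJordanDerivation (δ : A →+ M) : Prop :=
  ∀ a : A, δ (a * a) = op a • δ a + a • δ a

variable {δ : A →+ M}

theorem IsJordanDerivation.apply_mul_add_mul (hδ : IsJordanDerivation δ) (x y : A) :
    δ (x * y + y * x) = x • δ y + op y • δ x + y • δ x + op x • δ y := by
  have h := hδ (x + y)
  rw [show (x + y) * (x + y) = x * x + (x * y + y * x) + y * y by noncomm_ring] at h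
  simp only [map_add, op_add, add_smul, smul_add, hδ x, hδ y] at h
  rw [map_add]
  linear_combination (norm := abel) h

theorem IsJordanDerivation.two_nsmul_apply_mul_mul [SMulCommClass A Aᵐᵒᵖ M]
    (hδ : IsJordanDerivation δ) (a b : A) :
    2 • δ (a * b * a) = 2 • (op (b * a) • δ a + a • op a • δ b + (a * b) • δ a) := by
  have h₁ := hδ.apply_mul_add_mul a (a * b + b * a)
  have h₂ := hδ.apply_mul_add_mul (a * a) b
  rw [show a * (a * b + b * a) + (a * b + b * a) * a
      = (a * a * b + b * (a * a)) + (a * b * a + a * b * a) by noncomm_ring,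
    hδ.apply_mul_add_mul a b] at h₁
  have op_smul_comm (x y : A) (m : M) : op x • y • m = y • op x • m :=
    (smul_comm y (op x) m).symm
  simp only [two_nsmul, map_add, op_mul, op_add, mul_smul, add_smul, smul_add, hδ a,
    op_smul_comm] at h₁ h₂ ⊢
  linear_combination (norm := abel) h₁ - h₂

end JordanDerivation

open MulOpposite in
theorem jordan_derivation_apply_mul_mul_general
    {A M : Type*} [Ring A] [AddCommGroup M] [Module A M] [Module Aᵐᵒᵖ M]
    [SMulCommClass A Aᵐᵒᵖ M]
    (htf : ∀ m : M, 2 • m = 0 → m = 0)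
    (δ : A →+ M) (hδ : ∀ a : A, δ (a * a) = op a • δ a + a • δ a) :
    ∀ a b : A, δ (a * b * a) = op (b * a) • δ a + a • op a • δ b + (a * b) • δ a := by
  intro a b
  refine sub_eq_zero.mp (htf _ ?_)
  rw [smul_sub, IsJordanDerivation.two_nsmul_apply_mul_mul hδ a b, sub_self]

open MulOpposite in
/-- Let `A` be a 2-torsion-free ring, `M` an `A`-bimodule and `δ : A → M` a Jordan
derivation.  Then `δ(aba) = δ(a)ba + aδ(b)a + abδ(a)` for all `a, b ∈ A`. -/
theorem jordan_derivation_apply_mul_mul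
    {A M : Type*} [Ring A] [AddCommGroup M] [Module A M] [Module Aᵐᵒᵖ M]
    [SMulCommClass A Aᵐᵒᵖ M]
    (htf : ∀ m : M, 2 • m = 0 → m = 0)
    (htfA : ∀ a : A, 2 * a = 0 → a = 0)
    (δ : A →+ M) (hδ : ∀ a : A, δ (a * a) = op a • δ a + a • δ a) :
    ∀ a b : A, δ (a * b * a) = op (b * a) • δ a + a • op a • δ b + (a * b) • δ a :=
  jordan_derivation_apply_mul_mul_general htf δ hδ
end

section
/- Every Jordan derivation on a 2-torsion-free semiprime ring is a derivation. -/
/-!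
Write `G(a, b) = δ(ab) - δ(a)b - aδ(b)` and `[a, b] = ab - ba`. Polarising the Jordan identity and
cancelling 2 gives `δ(aba) = δ(a)ba + aδ(b)a + abδ(a)`, and expanding `δ(ab·x·ba + ba·x·ab)` in two
ways yields `G(a, b) x [a, b] + [a, b] x G(a, b) = 0` for all `x`. In a 2-torsion-free semiprime
ring this forces `G(a, b) x [a, b] = 0`, and two linearisations give `G(a, b) x [c, d] = 0` for all
`a, b, c, d, x`. Hence `g = G(a, b)` is central and annihilates all commutators. Since
`2g = δ[a, b] - [δa, b] - [a, δb]`, we get `2g³ = g²δ[a, b]`, and the polarised Jordan identity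
applied to `g[a, b] + [a, b]g = 0` gives `2g²δ[a, b] = 0`. So `g³ = 0`, and a central nilpotent
element of a semiprime ring vanishes.
-/

section Semiprime

variable {R : Type*} [Ring R]

theorem eq_zero_of_forall_commute_of_mul_self_eq_zero
    (hR : ∀ a : R, (∀ r : R, a * r * a = 0) → a = 0) {z : R} (hz : ∀ r, Commute z r)
    (hzz : z * z = 0) : z = 0 :=
  hR z fun r => by rw [(hz r).eq, mul_assoc, hzz, mul_zero]

theorem mul_mul_eq_zero_of_forall_mul_mul_add_mul_mul_eq_zero
    (h2 : ∀ a : R, 2 * a = 0 → a = 0) (hR : ∀ a : R, (∀ r : R, a * r * a = 0) → a = 0)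
    {p q : R} (h : ∀ x, p * x * q + q * x * p = 0) (x : R) : p * x * q = 0 :=
  hR _ fun y => h2 _ <| by
    -- `(pxq)y(pxq)` changes sign under three applications of `h`.
    linear_combination (norm := noncomm_ring)
      p * x * h y * (x * q) - h (x * p * y) * (x * q) + h x * (y * (p * x * q))

theorem mul_mul_eq_zero_of_forall_cross_eq_zero
    (hR : ∀ a : R, (∀ r : R, a * r * a = 0) → a = 0) {p q p' q' : R}
    (hpq : ∀ x, p * x * q = 0) (hcross : ∀ x, p * x * q' + p' * x * q = 0) (x : R) :
    p * x * q' = 0 :=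
  hR _ fun y => by
    linear_combination (norm := noncomm_ring)
      p * x * q' * y * hcross x - hpq (x * q' * y * p' * x)

theorem commute_of_forall_mul_mul_commutator_eq_zero
    (hR : ∀ a : R, (∀ r : R, a * r * a = 0) → a = 0) {g : R}
    (h : ∀ c d x : R, g * x * (c * d - d * c) = 0) (d : R) : Commute g d :=
  sub_eq_zero.mp <| hR _ fun y => by
    linear_combination (norm := noncomm_ring) h g d (d * y) - d * h g d y

theorem mul_commutator_eq_zero_of_forall_mul_mul_commutator_eq_zero
    (hR : ∀ a : R, (∀ r : R, a * r * a = 0) → a = 0) {g : R}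
    (h : ∀ c d x : R, g * x * (c * d - d * c) = 0) (c d : R) : g * (c * d - d * c) = 0 :=
  hR _ fun y => by simpa only [mul_assoc] using h c d ((c * d - d * c) * y * g)

end Semiprime

namespace JordanDerivation

variable {R : Type*} [Ring R]

def leibnizDefect (δ : R →+ R) (a b : R) : R := δ (a * b) - δ a * b - a * δ b

theorem leibnizDefect_add_left (δ : R →+ R) (a c b : R) :
    leibnizDefect δ (a + c) b = leibnizDefect δ a b + leibnizDefect δ c b := by
  simp only [leibnizDefect, add_mul, map_add]
  abel

theorem leibnizDefect_add_right (δ : R →+ R) (a b d : R) :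
    leibnizDefect δ a (b + d) = leibnizDefect δ a b + leibnizDefect δ a d := by
  simp only [leibnizDefect, mul_add, map_add]
  abel

variable {δ : R →+ R}

theorem map_mul_add_mul_swap (hδ : ∀ a : R, δ (a * a) = δ a * a + a * δ a) (a b : R) :
    δ (a * b + b * a) = δ a * b + a * δ b + δ b * a + b * δ a := by
  have e : a * b + b * a = (a + b) * (a + b) - a * a - b * b := by noncomm_ring
  rw [e, map_sub, map_sub, hδ, hδ, hδ, map_add]
  noncomm_ring

theorem leibnizDefect_add_leibnizDefect_swap (hδ : ∀ a : R, δ (a * a) = δ a * a + a * δ a)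
    (a b : R) : leibnizDefect δ a b + leibnizDefect δ b a = 0 := by
  have h := map_mul_add_mul_swap hδ a b
  rw [map_add] at h
  unfold leibnizDefect
  linear_combination (norm := noncomm_ring) h

theorem map_mul_mul_self (h2 : ∀ a : R, 2 * a = 0 → a = 0)
    (hδ : ∀ a : R, δ (a * a) = δ a * a + a * δ a) (a b : R) :
    δ (a * b * a) = δ a * b * a + a * δ b * a + a * b * δ a := by
  have e : a * b * a + a * b * a
      = a * (a * b + b * a) + (a * b + b * a) * a - (a * a * b + b * (a * a)) := by
    noncomm_ring
  have h := congrArg δ e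
  rw [map_sub, map_mul_add_mul_swap hδ, map_mul_add_mul_swap hδ, map_mul_add_mul_swap hδ, hδ,
    map_add] at h
  exact sub_eq_zero.mp <| h2 _ <| by linear_combination (norm := noncomm_ring) h

theorem map_mul_mul_add_mul_mul (h2 : ∀ a : R, 2 * a = 0 → a = 0)
    (hδ : ∀ a : R, δ (a * a) = δ a * a + a * δ a) (a b c : R) :
    δ (a * b * c + c * b * a) = δ a * b * c + a * δ b * c + a * b * δ c
      + (δ c * b * a + c * δ b * a + c * b * δ a) := by
  have e : a * b * c + c * b * a = (a + c) * b * (a + c) - a * b * a - c * b * c := by noncomm_ring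
  rw [e, map_sub, map_sub, map_mul_mul_self h2 hδ, map_mul_mul_self h2 hδ, map_mul_mul_self h2 hδ,
    map_add]
  noncomm_ring

theorem leibnizDefect_mul_mul_commutator_add (h2 : ∀ a : R, 2 * a = 0 → a = 0)
    (hδ : ∀ a : R, δ (a * a) = δ a * a + a * δ a) (a b x : R) :
    leibnizDefect δ a b * x * (a * b - b * a) + (a * b - b * a) * x * leibnizDefect δ a b = 0 := by
  have h := map_mul_mul_add_mul_mul h2 hδ (a * b) x (b * a)
  have e : a * b * x * (b * a) + b * a * x * (a * b)
      = a * (b * x * b) * a + b * (a * x * a) * b := by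
    noncomm_ring
  rw [e, map_add, map_mul_mul_self h2 hδ a (b * x * b), map_mul_mul_self h2 hδ b (a * x * a),
    map_mul_mul_self h2 hδ b x, map_mul_mul_self h2 hδ a x] at h
  have hba : δ (b * a) = δ a * b + a * δ b + δ b * a + b * δ a - δ (a * b) := by
    rw [← map_mul_add_mul_swap hδ, map_add]
    abel
  rw [hba] at h
  unfold leibnizDefect
  linear_combination (norm := noncomm_ring) h

theorem leibnizDefect_mul_mul_commutator_self (h2 : ∀ a : R, 2 * a = 0 → a = 0)
    (hR : ∀ a : R, (∀ r : R, a * r * a = 0) → a = 0)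
    (hδ : ∀ a : R, δ (a * a) = δ a * a + a * δ a) (a b x : R) :
    leibnizDefect δ a b * x * (a * b - b * a) = 0 :=
  mul_mul_eq_zero_of_forall_mul_mul_add_mul_mul_eq_zero h2 hR
    (leibnizDefect_mul_mul_commutator_add h2 hδ a b) x

theorem leibnizDefect_mul_mul_commutator_left (h2 : ∀ a : R, 2 * a = 0 → a = 0)
    (hR : ∀ a : R, (∀ r : R, a * r * a = 0) → a = 0)
    (hδ : ∀ a : R, δ (a * a) = δ a * a + a * δ a) (a b c x : R) :
    leibnizDefect δ a b * x * (c * b - b * c) = 0 := by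
  have self := leibnizDefect_mul_mul_commutator_self h2 hR hδ
  refine mul_mul_eq_zero_of_forall_cross_eq_zero hR (p' := leibnizDefect δ c b) (self a b)
    (fun y => ?_) x
  have h := self (a + c) b y
  rw [leibnizDefect_add_left] at h
  linear_combination (norm := noncomm_ring) h - self a b y - self c b y

theorem leibnizDefect_mul_mul_commutator (h2 : ∀ a : R, 2 * a = 0 → a = 0)
    (hR : ∀ a : R, (∀ r : R, a * r * a = 0) → a = 0)
    (hδ : ∀ a : R, δ (a * a) = δ a * a + a * δ a) (a b c d x : R) :
    leibnizDefect δ a b * x * (c * d - d * c) = 0 := by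
  have left := leibnizDefect_mul_mul_commutator_left h2 hR hδ
  refine mul_mul_eq_zero_of_forall_cross_eq_zero hR (p' := leibnizDefect δ a d) (left a b c)
    (fun y => ?_) x
  have h := left a (b + d) c y
  rw [leibnizDefect_add_right] at h
  linear_combination (norm := noncomm_ring) h - left a b c y - left a d c y

theorem two_mul_leibnizDefect (hδ : ∀ a : R, δ (a * a) = δ a * a + a * δ a) (a b : R) :
    2 * leibnizDefect δ a b = δ (a * b - b * a) - (δ a * b - b * δ a) - (a * δ b - δ b * a) := by
  have h := leibnizDefect_add_leibnizDefect_swap hδ a b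
  unfold leibnizDefect at h ⊢
  rw [map_sub]
  linear_combination (norm := noncomm_ring) h

theorem leibnizDefect_eq_zero (h2 : ∀ a : R, 2 * a = 0 → a = 0)
    (hR : ∀ a : R, (∀ r : R, a * r * a = 0) → a = 0)
    (hδ : ∀ a : R, δ (a * a) = δ a * a + a * δ a) (a b : R) : leibnizDefect δ a b = 0 := by
  set g := leibnizDefect δ a b
  set u := a * b - b * a
  have hg := leibnizDefect_mul_mul_commutator h2 hR hδ a b
  have hcomm : ∀ r, Commute g r := commute_of_forall_mul_mul_commutator_eq_zero hR hg
  have hann : ∀ c d, g * (c * d - d * c) = 0 :=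
    mul_commutator_eq_zero_of_forall_mul_mul_commutator_eq_zero hR hg
  have hgu : g * u = 0 := hann a b
  have hug : u * g = 0 := (hcomm u).eq ▸ hgu
  have hsq_δu : g * g * δ u = 0 := h2 _ <| by
    have h := map_mul_add_mul_swap hδ g u
    rw [hgu, hug, add_zero, map_zero] at h
    linear_combination (norm := noncomm_ring)
      -g * h - (hcomm (δ g)).eq * u - δ g * hgu + g * (hcomm (δ u)).eq - hgu * δ g
  have h2g : 2 * g = δ u - (δ a * b - b * δ a) - (a * δ b - δ b * a) :=
    two_mul_leibnizDefect hδ a b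
  have hcube : g * g * g = 0 := h2 _ <| by
    linear_combination (norm := noncomm_ring)
      g * g * h2g + hsq_δu - g * hann (δ a) b - g * hann a (δ b)
  have hsq : g * g = 0 :=
    eq_zero_of_forall_commute_of_mul_self_eq_zero hR (fun r => (hcomm r).mul_left (hcomm r))
      (by rw [← mul_assoc, hcube, zero_mul])
  exact eq_zero_of_forall_commute_of_mul_self_eq_zero hR hcomm hsq

end JordanDerivation

/-- Cusack's theorem: every Jordan derivation on a 2-torsion-free semiprime ring is a
derivation. -/
theorem jordan_derivation_of_semiprime_is_derivation
    {R : Type*} [Ring R]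
    (htf : ∀ a : R, 2 * a = 0 → a = 0)
    (hsemiprime : ∀ a : R, (∀ r : R, a * r * a = 0) → a = 0)
    (δ : R →+ R) (hδ : ∀ a : R, δ (a * a) = δ a * a + a * δ a) :
    ∀ a b : R, δ (a * b) = δ a * b + a * δ b := by
  intro a b
  have h := JordanDerivation.leibnizDefect_eq_zero htf hsemiprime hδ a b
  rwa [JordanDerivation.leibnizDefect, sub_sub, sub_eq_zero] at h
end

section
/- Let A be a 2-torsion-free ring and δ : A → A a Jordan derivation. Then for all a, b ∈ A, δ(ab)·[a,b] + [a,b]·δ(ab) = δ(a)b[a,b] + aδ(b)[a,b] + [a,b]δ(a)b + [a,b]aδ(b), where [a,b] = ab − ba; equivalently, the map (a,b) ↦ δ(ab) − δ(a)b − aδ(b) annihilates commutators in this Jordan sense. -/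
/-!
Polarizing `δ(x²) = δ(x)x + xδ(x)` gives `δ(xy + yx)`; applying this to `x` and `xy + yx` and
cancelling a factor `2` gives `δ(xyx) = δ(x)yx + xδ(y)x + xyδ(x)`. The identity then comes from
expanding `δ(abab + baba)` in two ways: as `δ((ab)²) + δ((ba)²)`, and as `δ(a(bab) + (bab)a)`.
-/

namespace AddMonoidHom

variable {A : Type*} [Ring A]

def IsJordanDerivation (δ : A →+ A) : Prop :=
  ∀ a : A, δ (a * a) = δ a * a + a * δ a

namespace IsJordanDerivation

variable {δ : A →+ A}

theorem map_mul_add_mul_swap (hδ : IsJordanDerivation δ) (x y : A) :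
    δ (x * y + y * x) = δ x * y + x * δ y + δ y * x + y * δ x := by
  have hsq := hδ (x + y)
  rw [show (x + y) * (x + y) = x * x + (x * y + y * x) + y * y by noncomm_ring,
    map_add, map_add, hδ x, hδ y] at hsq
  simp only [map_add] at hsq ⊢
  linear_combination (norm := noncomm_ring) hsq

theorem map_jordan_triple (hδ : IsJordanDerivation δ) (htf : ∀ a : A, 2 * a = 0 → a = 0)
    (x y : A) : δ (x * y * x) = δ x * (y * x) + x * δ y * x + x * y * δ x := by
  have h := hδ.map_mul_add_mul_swap x (x * y + y * x)
  rw [show x * (x * y + y * x) + (x * y + y * x) * x = (x * x * y + y * (x * x)) + 2 * (x * y * x)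
      by noncomm_ring, map_add, hδ.map_mul_add_mul_swap, hδ x, hδ.map_mul_add_mul_swap] at h
  have h2 : 2 * (δ (x * y * x) - (δ x * (y * x) + x * δ y * x + x * y * δ x)) = 0 := by
    rw [show δ (2 * (x * y * x)) = 2 * δ (x * y * x) by
      rw [two_mul, two_mul, map_add]] at h
    linear_combination (norm := noncomm_ring) h
  exact sub_eq_zero.mp (htf _ h2)

end IsJordanDerivation

end AddMonoidHom

/-- Brešar's key identity: if `δ` is a Jordan derivation on a 2-torsion-free ring `A`,
then `δ(ab)[a,b] + [a,b]δ(ab) = δ(a)b[a,b] + aδ(b)[a,b] + [a,b]δ(a)b + [a,b]aδ(b)`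
for all `a, b ∈ A`, where `[a,b] = ab − ba`.  Equivalently, with
`D(a,b) = δ(ab) − δ(a)b − aδ(b)` one has `D(a,b)[a,b] + [a,b]D(a,b) = 0`. -/
theorem jordan_derivation_bresar_identity
    {A : Type*} [Ring A] (htf : ∀ a : A, 2 * a = 0 → a = 0)
    (δ : A →+ A) (hδ : ∀ a : A, δ (a * a) = δ a * a + a * δ a) :
    ∀ a b : A,
      δ (a * b) * (a * b - b * a) + (a * b - b * a) * δ (a * b) =
        δ a * b * (a * b - b * a) + a * δ b * (a * b - b * a)
          + (a * b - b * a) * (δ a * b) + (a * b - b * a) * (a * δ b) := by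
  have hJ : δ.IsJordanDerivation := hδ
  intro a b
  have hba : δ (b * a) = δ a * b + a * δ b + δ b * a + b * δ a - δ (a * b) := by
    rw [← hJ.map_mul_add_mul_swap, map_add, add_sub_cancel_left]
  have h := hJ.map_mul_add_mul_swap a (b * a * b)
  rw [show a * (b * a * b) + b * a * b * a = a * b * (a * b) + b * a * (b * a) by noncomm_ring,
    map_add, hJ, hJ, hJ.map_jordan_triple htf, hba] at h
  linear_combination (norm := noncomm_ring) h
end

section
/- Let M be a von Neumann algebra and p, q projections in M. Then p − p ∧ q is Murray–von Neumann equivalent to p ∨ q − q (the Kaplansky parallelogram law). -/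
/-!
Put `z = p - q p`. The polar decomposition `z = u |z|` gives a partial isometry `u` from the
right support of `z` (the least projection `e` with `z e = z`) onto its left support (the least
projection `g` with `g z = z`), and `u ∈ M` because every operator commuting with `z` and `z*`
commutes with `|z|` and hence with `u`. The right support is `p - p ∧ q`: `p - e` is a projection
below `p` and `q`, while `p ∧ q` is killed by `z` and hence by `e`. Dually the left support is
`p ∨ q - q`: `q + g` is a projection above `p` and `q`, while `p ∨ q` fixes `z` and hence `g`.
-/

section Support

variable {A : Type*} [Ring A] {a e s u w y z : A}

-- Among projections, `IsLeftSupport e a` makes `e` the least `f` with `f * a = a` (take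
-- `r = 1 - f`).
def IsLeftSupport (e a : A) : Prop := e * a = a ∧ ∀ r, r * a = 0 → r * e = 0

def IsRightSupport (e a : A) : Prop := a * e = a ∧ ∀ r, a * r = 0 → e * r = 0

theorem IsLeftSupport.mul_eq_of_mul_eq (h : IsLeftSupport e a) (hw : w * a = a) :
    w * e = e := by
  have := h.2 (w - 1) (by rw [sub_mul, hw, one_mul, sub_self])
  rwa [sub_mul, one_mul, sub_eq_zero] at this

theorem IsRightSupport.mul_eq_of_mul_eq (h : IsRightSupport e a) (hw : a * w = a) :
    e * w = e := by
  have := h.2 (w - 1) (by rw [mul_sub, hw, mul_one, sub_self])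
  rwa [mul_sub, mul_one, sub_eq_zero] at this

theorem IsLeftSupport.commute_of_mul_eq (hsupp : IsLeftSupport e s) (hue : u * e = u)
    (hus : u * s = z) (hys : Commute y s) (hyz : Commute y z) (hye : Commute y e) :
    Commute y u := by
  have hs : (y * u - u * y) * s = 0 := by
    rw [sub_mul, mul_assoc, hus, mul_assoc, hys.eq, ← mul_assoc, hus, hyz.eq, sub_self]
  have he := hsupp.2 _ hs
  rw [sub_mul, sub_eq_zero, mul_assoc, hue, mul_assoc, hye.eq, ← mul_assoc, hue] at he
  exact he

variable [StarRing A] {b : A}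

theorem IsSelfAdjoint.mul_eq_right_iff (ha : IsSelfAdjoint a) (hb : IsSelfAdjoint b) :
    a * b = b ↔ b * a = b := by
  constructor <;> intro h <;>
    simpa only [star_mul, ha.star_eq, hb.star_eq] using congrArg star h

theorem IsLeftSupport.isRightSupport_star (h : IsLeftSupport e a) :
    IsRightSupport (star e) (star a) := by
  refine ⟨by rw [← star_mul, h.1], fun r hr => ?_⟩
  have := h.2 (star r) (by rw [← star_star a, ← star_mul, hr, star_zero])
  rw [← star_star r, ← star_mul, this, star_zero]

theorem IsLeftSupport.commute (h : IsLeftSupport e a) (he : IsSelfAdjoint e)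
    (hy : Commute y a) (hy' : Commute (star y) a) : Commute y e := by
  -- `(1 - e) x e = 0` for `x = y, star y`, since `(1 - e) x a = (1 - e) a x = 0`
  have compress : ∀ x, Commute x a → x * e = e * x * e := fun x hx => by
    have := h.2 ((1 - e) * x) (by
      rw [mul_assoc, hx.eq, ← mul_assoc, sub_mul, one_mul, h.1, sub_self, zero_mul])
    rwa [sub_mul, sub_mul, one_mul, sub_eq_zero] at this
  have h₁ := compress y hy
  have h₂ := congrArg star (compress (star y) hy')
  simp only [star_mul, star_star, he.star_eq, ← mul_assoc] at h₂
  rw [Commute, SemiconjBy, h₁, ← h₂]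

theorem IsLeftSupport.isRightSupport_of_mul_eq (hsupp : IsLeftSupport e s)
    (he : IsSelfAdjoint e) (hs : IsSelfAdjoint s) (hus : u * s = z)
    (hker : ∀ r, z * r = 0 → s * r = 0) : IsRightSupport e z := by
  have hright := hsupp.isRightSupport_star
  rw [he.star_eq, hs.star_eq] at hright
  exact ⟨by rw [← hus, mul_assoc, hright.1], fun r hr => hright.2 r (hker r hr)⟩

end Support

section PartialIsometry

variable {A : Type*} [Ring A] [StarRing A] {s u z : A}

def IsPartialIsometry (u : A) : Prop := u * star u * u = u

theorem IsPartialIsometry.mul_star_mul_self (hu : IsPartialIsometry u) :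
    u * (star u * u) = u := by
  rw [← mul_assoc, hu]

theorem IsPartialIsometry.isStarProjection_star_mul_self (hu : IsPartialIsometry u) :
    IsStarProjection (star u * u) :=
  ⟨by rw [IsIdempotentElem, mul_assoc, ← mul_assoc u, hu], .star_mul_self u⟩

theorem IsPartialIsometry.isStarProjection_mul_star_self (hu : IsPartialIsometry u) :
    IsStarProjection (u * star u) :=
  ⟨by rw [IsIdempotentElem, ← mul_assoc, hu], .mul_star_self u⟩

theorem IsPartialIsometry.isLeftSupport_mul_star_self (hu : IsPartialIsometry u)
    (hsupp : IsLeftSupport (star u * u) s) (hus : u * s = z) :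
    IsLeftSupport (u * star u) z := by
  refine ⟨by rw [← hus, ← mul_assoc, hu], fun r hr => ?_⟩
  have hru : r * u = 0 := by
    rw [← hu.mul_star_mul_self, ← mul_assoc]
    exact hsupp.2 (r * u) (by rw [mul_assoc, hus, hr])
  rw [← mul_assoc, hru, zero_mul]

end PartialIsometry

theorem isPartialIsometry_of_isStarProjection {A : Type*} [NormedRing A] [StarRing A]
    [CStarRing A] {u : A} (h : IsStarProjection (star u * u)) : IsPartialIsometry u := by
  set e := star u * u with he_def
  have he : star e = e := h.isSelfAdjoint.star_eq
  have hee : e * e = e := h.isIdempotentElem.eq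
  have h0 : star (u * e - u) * (u * e - u) = 0 :=
    calc star (u * e - u) * (u * e - u) = e * e * e - e * e - e * e + e := by
          rw [star_sub, star_mul, he, he_def]; noncomm_ring
      _ = 0 := by rw [hee, hee, sub_self, sub_add_cancel]
  rw [IsPartialIsometry, mul_assoc]
  exact sub_eq_zero.mp ((CStarRing.star_mul_self_eq_zero_iff _).mp h0)

section Lattice

variable {A S : Type*} [Ring A] [StarRing A] [SetLike S A] [AddSubgroupClass S A] {M : S}
  {p q e g : A}

theorem IsRightSupport.eq_sub_of_glb {m : A} (hsupp : IsRightSupport e (p - q * p))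
    (hpM : p ∈ M) (heM : e ∈ M) (hp : IsStarProjection p) (he : IsStarProjection e)
    (hm : IsSelfAdjoint m) (hm_le : p * m = m ∧ q * m = m)
    (hm_glb : ∀ r ∈ M, r * r = r → star r = r → p * r = r → q * r = r → m * r = r) :
    e = p - m := by
  have hep : e * p = e := hsupp.mul_eq_of_mul_eq (by
    rw [sub_mul, mul_assoc, hp.isIdempotentElem.eq])
  have hpe : p * e = e := (hp.isSelfAdjoint.mul_eq_right_iff he.isSelfAdjoint).2 hep
  have hqe : q * e = e - (p - q * p) :=
    calc q * e = (p - (p - q * p)) * e := by rw [sub_sub_cancel, mul_assoc, hpe]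
      _ = e - (p - q * p) := by rw [sub_mul, hpe, hsupp.1]
  have ht : IsSelfAdjoint (p - e) := hp.isSelfAdjoint.sub he.isSelfAdjoint
  have hmt : m * (p - e) = p - e := hm_glb _ (sub_mem hpM heM)
    (by rw [sub_mul, mul_sub, mul_sub, hp.isIdempotentElem.eq, hpe, hep,
      he.isIdempotentElem.eq, sub_self, sub_zero])
    ht.star_eq (by rw [mul_sub, hp.isIdempotentElem.eq, hpe])
    (by rw [mul_sub, hqe]; abel)
  have htm : (p - e) * m = m := by
    rw [sub_mul, hm_le.1, hsupp.2 m (by rw [sub_mul, mul_assoc, hm_le.1, hm_le.2, sub_self]),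
      sub_zero]
  have htm_eq : p - e = m := ((hm.mul_eq_right_iff ht).1 hmt).symm.trans htm
  rw [← htm_eq, sub_sub_cancel]

theorem IsLeftSupport.eq_sub_of_lub {j : A} (hsupp : IsLeftSupport g (p - q * p))
    (hqM : q ∈ M) (hgM : g ∈ M) (hq : IsStarProjection q) (hg : IsStarProjection g)
    (hj : IsSelfAdjoint j) (hj_ge : j * p = p ∧ j * q = q)
    (hj_lub : ∀ r ∈ M, r * r = r → star r = r → r * p = p → r * q = q → r * j = j) :
    g = j - q := by
  have hqg : q * g = 0 :=
    hsupp.2 q (by rw [mul_sub, ← mul_assoc, hq.isIdempotentElem.eq, sub_self])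
  have hgq : g * q = 0 := by
    simpa only [star_mul, star_zero, hg.isSelfAdjoint.star_eq, hq.isSelfAdjoint.star_eq]
      using congrArg star hqg
  have hgp : g * p = p - q * p :=
    calc g * p = g * (q * p) + g * (p - q * p) := by rw [← mul_add, add_sub_cancel]
      _ = p - q * p := by rw [← mul_assoc, hgq, zero_mul, zero_add, hsupp.1]
  have hw : IsSelfAdjoint (q + g) := hq.isSelfAdjoint.add hg.isSelfAdjoint
  have hwj : (q + g) * j = j := hj_lub _ (add_mem hqM hgM)
    (by rw [add_mul, mul_add, mul_add, hq.isIdempotentElem.eq, hqg, hgq,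
      hg.isIdempotentElem.eq, add_zero, zero_add])
    hw.star_eq
    (by rw [add_mul, hgp, add_sub_cancel])
    (by rw [add_mul, hq.isIdempotentElem.eq, hgq, add_zero])
  have hjw : j * (q + g) = q + g := by
    rw [mul_add, hj_ge.2,
      hsupp.mul_eq_of_mul_eq (by rw [mul_sub, hj_ge.1, ← mul_assoc, hj_ge.2])]
  have hwj_eq : q + g = j := ((hj.mul_eq_right_iff hw).1 hjw).symm.trans hwj
  rw [← hwj_eq, add_sub_cancel_left]

end Lattice

section Hilbert

open ContinuousLinearMap

variable {𝕜 E : Type*} [RCLike 𝕜] [NormedAddCommGroup E] [InnerProductSpace 𝕜 E]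
  [CompleteSpace E]

theorem isLeftSupport_starProjection_range (T : E →L[𝕜] E) :
    IsLeftSupport T.range.topologicalClosure.starProjection T := by
  refine ⟨ext fun x => Submodule.starProjection_eq_self_iff.2
      (T.range.le_topologicalClosure (LinearMap.mem_range_self _ x)),
    fun r hr => ext fun x => ?_⟩
  have hker : T.range.topologicalClosure ≤ r.ker :=
    T.range.topologicalClosure_minimal (by rintro _ ⟨x, rfl⟩; exact congr($hr x))
      r.isClosed_ker
  exact hker (Submodule.starProjection_apply_mem _ x)

-- `u` maps `s x` to `z x`, isometrically on the closure of the range of `s`, and kills the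
-- orthogonal complement.
theorem exists_mul_eq_of_norm_apply_eq (s z : E →L[𝕜] E) (h : ∀ x, ‖z x‖ = ‖s x‖) :
    ∃ u : E →L[𝕜] E,
      u * s = z ∧ star u * u = s.range.topologicalClosure.starProjection := by
  set K := s.range.topologicalClosure
  have hsK : ∀ x, s x ∈ K := fun x =>
    s.range.le_topologicalClosure (LinearMap.mem_range_self _ x)
  set sK : E →ₗ[𝕜] K := (s : E →ₗ[𝕜] E).codRestrict K hsK
  have hsK_dense : DenseRange sK := by
    refine Topology.IsInducing.subtypeVal.dense_iff.2 fun k => ?_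
    rw [← Set.range_comp]
    exact k.2
  have hv := LinearMap.extendOfNorm_eq (f := (z : E →ₗ[𝕜] E)) hsK_dense
    ⟨1, fun x => by rw [one_mul]; exact (h x).le⟩
  set v : K →L[𝕜] E := (z : E →ₗ[𝕜] E).extendOfNorm sK
  have hv_norm : ∀ k, ‖v k‖ = ‖k‖ := fun k =>
    hsK_dense.induction (by rintro _ ⟨x, rfl⟩; rw [hv]; exact h x)
      (isClosed_eq (by fun_prop) continuous_norm) k
  refine ⟨v ∘L K.orthogonalProjectionOnto, ext fun x => ?_, ?_⟩
  · have hP : K.orthogonalProjectionOnto (s x) = sK x :=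
      Submodule.orthogonalProjectionOnto_mem_subspace_eq_self ⟨s x, hsK x⟩
    change v (K.orthogonalProjectionOnto (s x)) = z x
    rw [hP, hv]
    rfl
  · rw [star_eq_adjoint, mul_def, adjoint_comp, K.adjoint_orthogonalProjectionOnto, comp_assoc,
      ← comp_assoc _ v, (norm_map_iff_adjoint_comp_self v).1 hv_norm]
    rfl

end Hilbert

section Polar

open ContinuousLinearMap

variable {H : Type*} [NormedAddCommGroup H] [InnerProductSpace ℂ H] [CompleteSpace H]

theorem norm_cfcAbs_apply (z : H →L[ℂ] H) (x : H) : ‖CFC.abs z x‖ = ‖z x‖ := by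
  rw [apply_norm_eq_sqrt_inner_adjoint_left, apply_norm_eq_sqrt_inner_adjoint_left,
    ← star_eq_adjoint, ← star_eq_adjoint, ← mul_def, ← mul_def,
    (CFC.abs_nonneg z).isSelfAdjoint.star_eq, CFC.abs_mul_abs]

theorem exists_isPartialIsometry_supports (z : H →L[ℂ] H) :
    ∃ u : H →L[ℂ] H, IsPartialIsometry u ∧ IsRightSupport (star u * u) z ∧
      IsLeftSupport (u * star u) z ∧
      ∀ y, Commute y z → Commute y (star z) → Commute y u := by
  obtain ⟨u, hus, hE⟩ := exists_mul_eq_of_norm_apply_eq (CFC.abs z) z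
    fun x => (norm_cfcAbs_apply z x).symm
  have hsupp : IsLeftSupport (star u * u) (CFC.abs z) :=
    hE ▸ isLeftSupport_starProjection_range _
  have hu : IsPartialIsometry u :=
    isPartialIsometry_of_isStarProjection (hE ▸ isStarProjection_starProjection)
  have hker : ∀ r, z * r = 0 → CFC.abs z * r = 0 := fun r hr => ext fun x => by
    have hzr : z (r x) = 0 := congr($hr x)
    change CFC.abs z (r x) = 0
    rw [← norm_eq_zero, norm_cfcAbs_apply, hzr, norm_zero]
  refine ⟨u, hu, hsupp.isRightSupport_of_mul_eq (.star_mul_self u)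
    (CFC.abs_nonneg z).isSelfAdjoint hus hker, hu.isLeftSupport_mul_star_self hsupp hus,
    fun y hyz hyz' => ?_⟩
  have hzy' : Commute z (star y) := by simpa using hyz'.star_star.symm
  have hys : Commute y (CFC.abs z) := (hyz.symm.cfcAbs_left hzy').symm
  have hys' : Commute (star y) (CFC.abs z) := (hzy'.cfcAbs_left (by simpa using hyz.symm)).symm
  exact hsupp.commute_of_mul_eq hu.mul_star_mul_self hus hys hyz
    (hsupp.commute (.star_mul_self u) hys hys')

theorem VonNeumannAlgebra.mem_of_commute {M : VonNeumannAlgebra H} {z u : H →L[ℂ] H}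
    (hz : z ∈ M) (h : ∀ y, Commute y z → Commute y (star z) → Commute y u) : u ∈ M := by
  rw [← M.commutant_commutant, mem_commutant_iff]
  intro y hy
  rw [mem_commutant_iff] at hy
  exact h y (hy z hz).symm (hy _ (star_mem hz)).symm

end Polar

theorem parallelogram_law_murray_von_neumann_general
    {H : Type*} [NormedAddCommGroup H] [InnerProductSpace ℂ H] [CompleteSpace H]
    (M : VonNeumannAlgebra H) (p q m j : H →L[ℂ] H)
    (hpM : p ∈ M) (hqM : q ∈ M)
    (hp : p * p = p ∧ star p = p) (hq : q * q = q ∧ star q = q)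
    (hm : m * m = m ∧ star m = m) (hj : j * j = j ∧ star j = j)
    -- `m` is the greatest lower bound of `p` and `q` among projections of `M`
    (hm_le : p * m = m ∧ q * m = m)
    (hm_glb : ∀ r : H →L[ℂ] H, r ∈ M → r * r = r → star r = r →
      p * r = r → q * r = r → m * r = r)
    -- `j` is the least upper bound of `p` and `q` among projections of `M`
    (hj_ge : j * p = p ∧ j * q = q)
    (hj_lub : ∀ r : H →L[ℂ] H, r ∈ M → r * r = r → star r = r →
      r * p = p → r * q = q → r * j = j) :
    ∃ u ∈ M, star u * u = p - m ∧ u * star u = j - q := by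
  obtain ⟨u, hu, hright, hleft, hcomm⟩ := exists_isPartialIsometry_supports (p - q * p)
  have huM : u ∈ M := VonNeumannAlgebra.mem_of_commute (sub_mem hpM (mul_mem hqM hpM)) hcomm
  exact ⟨u, huM,
    hright.eq_sub_of_glb hpM (mul_mem (star_mem huM) huM) ⟨hp.1, hp.2⟩
      hu.isStarProjection_star_mul_self hm.2 hm_le hm_glb,
    hleft.eq_sub_of_lub hqM (mul_mem huM (star_mem huM)) ⟨hq.1, hq.2⟩
      hu.isStarProjection_mul_star_self hj.2 hj_ge hj_lub⟩

/-- Kaplansky's parallelogram law: for projections `p, q` in a von Neumann algebra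
`M`, the projection `p − p ∧ q` is Murray–von Neumann equivalent (via a partial
isometry in `M`) to `p ∨ q − q`.  Here `m` is the meet and `j` the join of `p` and
`q` in the projection lattice of `M`, characterized by the order `e ≤ f ↔ f e = e`. -/
theorem parallelogram_law_murray_von_neumann
    {H : Type*} [NormedAddCommGroup H] [InnerProductSpace ℂ H] [CompleteSpace H]
    (M : VonNeumannAlgebra H) (p q m j : H →L[ℂ] H)
    (hpM : p ∈ M) (hqM : q ∈ M) (hmM : m ∈ M) (hjM : j ∈ M)
    (hp : p * p = p ∧ star p = p) (hq : q * q = q ∧ star q = q)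
    (hm : m * m = m ∧ star m = m) (hj : j * j = j ∧ star j = j)
    -- `m` is the greatest lower bound of `p` and `q` among projections of `M`
    (hm_le : p * m = m ∧ q * m = m)
    (hm_glb : ∀ r : H →L[ℂ] H, r ∈ M → r * r = r → star r = r →
      p * r = r → q * r = r → m * r = r)
    -- `j` is the least upper bound of `p` and `q` among projections of `M`
    (hj_ge : j * p = p ∧ j * q = q)
    (hj_lub : ∀ r : H →L[ℂ] H, r ∈ M → r * r = r → star r = r →
      r * p = p → r * q = q → r * j = j) :
    ∃ u ∈ M, star u * u = p - m ∧ u * star u = j - q :=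
  parallelogram_law_murray_von_neumann_general M p q m j hpM hqM hp hq hm hj hm_le hm_glb hj_ge
    hj_lub
end
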